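/- arXiv:1907.03948 — 6 statements merged into one kernel-verified Lean document; each statement's English description precedes it below -/
import Mathlib

section
/- For all real numbers u, v, one has (u·log|u| − v·log|v|)·(u − v) ≤ (u − v)²·log(max(|u|,|v|)) + (u − v)², where t·log|t| is interpreted as 0 when t = 0 and (u−v)²·log(max(|u|,|v|)) is interpreted as 0 when u = v = 0. -/
private lemma key2 (u v : ℝ) (h : |v| ≤ |u|) :
    v * (u - v) * (Real.log |u| - Real.log |v|) ≤ (u - v) ^ 2 := by
  by_cases hv : v = 0
  · simp [hv]
    positivity
  · have hv0 : (0:ℝ) < |v| := abs_pos.mpr hv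
    have hu0 : (0:ℝ) < |u| := lt_of_lt_of_le hv0 h
    have hd0 : 0 ≤ Real.log |u| - Real.log |v| := by
      have := Real.log_le_log hv0 h
      linarith
    have hratio : Real.log |u| - Real.log |v| ≤ |u| / |v| - 1 := by
      have h1 : Real.log (|u| / |v|) ≤ |u| / |v| - 1 :=
        Real.log_le_sub_one_of_pos (div_pos hu0 hv0)
      rwa [Real.log_div (ne_of_gt hu0) (ne_of_gt hv0)] at h1
    set d := Real.log |u| - Real.log |v| with hd
    have h2 : |v| * d ≤ |u| - |v| := by
      have h2' := mul_le_mul_of_nonneg_left hratio (le_of_lt hv0)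
      have : |v| * (|u| / |v| - 1) = |u| - |v| := by
        field_simp
      calc |v| * d ≤ |v| * (|u| / |v| - 1) := h2'
        _ = |u| - |v| := this
    have h3 : v * (u - v) ≤ |v| * |u - v| := by
      calc v * (u - v) ≤ |v * (u - v)| := le_abs_self _
        _ = |v| * |u - v| := abs_mul _ _
    have h4 : |u| - |v| ≤ |u - v| := abs_sub_abs_le_abs_sub u v
    have h5 : v * (u - v) * d ≤ |v| * |u - v| * d :=
      mul_le_mul_of_nonneg_right h3 hd0
    have h6 : |v| * |u - v| * d = |u - v| * (|v| * d) := by ring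
    have h7 : |u - v| * (|v| * d) ≤ |u - v| * |u - v| :=
      mul_le_mul (le_refl _) (le_trans h2 h4) (by positivity) (abs_nonneg _) |>.trans_eq rfl
    have h8 : |u - v| * |u - v| = (u - v) ^ 2 := by
      rw [← abs_mul, ← sq, abs_sq]
    linarith [h5, h6 ▸ h5, h7]

private lemma key (u v : ℝ) (h : |v| ≤ |u|) :
    (u * Real.log |u| - v * Real.log |v|) * (u - v) ≤
      (u - v) ^ 2 * Real.log (max |u| |v|) + (u - v) ^ 2 := by
  rw [max_eq_left h]
  have hk := key2 u v h
  nlinarith [hk]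

theorem stmt_5 (u v : ℝ) :
    (u * Real.log |u| - v * Real.log |v|) * (u - v) ≤
      (u - v) ^ 2 * Real.log (max |u| |v|) + (u - v) ^ 2 := by
  rcases le_total |v| |u| with h | h
  · exact key u v h
  · have := key v u h
    rw [max_comm] at this
    nlinarith [this]
end

section
/- Let u, v be real numbers with u·v > 0 and |u| ≥ |v|, u ≠ v, and let α ∈ (0,1). Then (u − v)²·log(u/(u − v)) ≤ |u − v|^{2α} · (1/(2(1−α)e)) · |u|^{2(1−α)}. (Note that under the hypotheses, u and u − v have the same sign, so u/(u−v) > 0.) -/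
theorem stmt_7 (u v α : ℝ) (huv : 0 < u * v) (h : |v| ≤ |u|) (hne : u ≠ v)
    (hα0 : 0 < α) (hα1 : α < 1) :
    (u - v) ^ 2 * Real.log (u / (u - v)) ≤
      |u - v| ^ (2 * α) * (1 / (2 * (1 - α) * Real.exp 1)) * |u| ^ (2 * (1 - α)) := by
  have hd : u - v ≠ 0 := sub_ne_zero.mpr hne
  have hu : u ≠ 0 := by
    intro h0; rw [h0, zero_mul] at huv; exact lt_irrefl 0 huv
  have hqpos : 0 < u / (u - v) := by
    rcases lt_or_gt_of_ne hu with hneg | hpos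
    · have hv : v < 0 := by
        by_contra hv
        push_neg at hv
        nlinarith
      have : u < v := by
        rw [abs_of_neg hv, abs_of_neg hneg] at h
        rcases lt_or_eq_of_le (by linarith : u ≤ v) with h' | h'
        · exact h'
        · exact absurd h' hne
      exact div_pos_of_neg_of_neg hneg (by linarith)
    · have hv : 0 < v := by
        by_contra hv
        push_neg at hv
        nlinarith
      have : v < u := by
        rw [abs_of_pos hv, abs_of_pos hpos] at h
        rcases lt_or_eq_of_le h with h' | h'
        · exact h'
        · exact absurd h'.symm hne
      exact div_pos hpos (by linarith)
  set a := |u - v| with ha_def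
  set b := |u| with hb_def
  set c := 2 * (1 - α) with hc_def
  have hc : 0 < c := by rw [hc_def]; nlinarith
  have ha : 0 < a := abs_pos.mpr hd
  have hb : 0 < b := abs_pos.mpr hu
  have he : (0:ℝ) < Real.exp 1 := Real.exp_pos 1
  have hquot : u / (u - v) = b / a := by
    rw [← abs_of_pos hqpos, abs_div]
  have hlog : ∀ x : ℝ, 0 < x → Real.log x ≤ x / Real.exp 1 := by
    intro x hx
    have h1 := Real.log_le_sub_one_of_pos (div_pos hx he)
    rw [Real.log_div hx.ne' (Real.exp_ne_zero 1), Real.log_exp] at h1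
    linarith
  have hlogc : Real.log (b / a) ≤ (b / a) ^ c / (c * Real.exp 1) := by
    have htpos : 0 < b / a := div_pos hb ha
    have h1 := hlog ((b / a) ^ c) (Real.rpow_pos_of_pos htpos c)
    rw [Real.log_rpow htpos] at h1
    have h2 : Real.log (b / a) ≤ (b / a) ^ c / Real.exp 1 / c := by
      rw [le_div_iff₀ hc]
      linarith [mul_comm c (Real.log (b / a))]
    rwa [div_div, mul_comm (Real.exp 1) c] at h2
  have key : a ^ 2 * ((b / a) ^ c / (c * Real.exp 1)) =
      a ^ (2 * α) * (1 / (c * Real.exp 1)) * b ^ c := by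
    rw [Real.div_rpow hb.le ha.le]
    have h2 : a ^ (2 * α) * a ^ c = a ^ 2 := by
      rw [← Real.rpow_add ha]
      have : 2 * α + c = 2 := by rw [hc_def]; ring
      rw [this]
      exact Real.rpow_two a
    have hac : (0:ℝ) < a ^ c := Real.rpow_pos_of_pos ha c
    field_simp
    rw [← h2]; ring
  calc (u - v) ^ 2 * Real.log (u / (u - v)) = a ^ 2 * Real.log (b / a) := by
        rw [hquot, ha_def, sq_abs]
    _ ≤ a ^ 2 * ((b / a) ^ c / (c * Real.exp 1)) := by
        exact mul_le_mul_of_nonneg_left hlogc (sq_nonneg a)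
    _ = a ^ (2 * α) * (1 / (c * Real.exp 1)) * b ^ c := key
end

section
/- Nonlinear Gronwall inequality: Let a, b, Y : ℝ → ℝ be nonnegative continuous functions, let c ≥ 0 and 0 ≤ α < 1, and let t₀ ∈ ℝ. Suppose that for all t ≥ t₀, Y(t) ≤ c + ∫_{t₀}^t (a(s)·Y(s) + b(s)·Y(s)^α) ds. Then for all t ≥ t₀, Y(t) ≤ [ c^{1−α}·exp((1−α)·∫_{t₀}^t a(s) ds) + (1−α)·∫_{t₀}^t b(s)·exp((1−α)·∫_s^t a(r) dr) ds ]^{1/(1−α)}. -/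
/-!
Put `Z t = c + ∫_{t₀}^t (a Y + b Y^α)`, so that `Y ≤ Z` and `Z' ≤ a Z + b Z^α`. When `Z > 0`, the
Bernoulli substitution `W = Z^(1-α)` linearises this into `W' ≤ (1-α) (a W + b)`, which the
integrating factor `exp (-(1-α) ∫ a)` integrates to the stated bound on `W`, hence on
`Y ≤ W^(1/(1-α))`.
For `c = 0` the function `Z` may vanish, where `Z^(1-α)` is not differentiable; the bound is
then obtained from the case `c > 0` by continuity in `c`.
-/

open intervalIntegral Set Real

theorem le_exp_integral_add_integral_of_hasDerivAt_le {W W' k m : ℝ → ℝ} {t₀ t₁ : ℝ}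
    (ht : t₀ ≤ t₁) (hk : Continuous k) (hm : Continuous m) (hW : ContinuousOn W (Icc t₀ t₁))
    (hW' : ∀ x ∈ Ioo t₀ t₁, HasDerivAt W (W' x) x)
    (hle : ∀ x ∈ Ioo t₀ t₁, W' x ≤ k x * W x + m x) :
    W t₁ ≤ W t₀ * exp (∫ s in t₀..t₁, k s) + ∫ s in t₀..t₁, m s * exp (∫ r in s..t₁, k r) := by
  set K : ℝ → ℝ := fun t => ∫ s in t₀..t, k s
  have hK : ∀ x, HasDerivAt K (k x) x := fun x => (hk.integral_hasStrictDerivAt t₀ x).hasDerivAt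
  have hE : ∀ x, HasDerivAt (fun t => exp (-K t)) (exp (-K x) * -k x) x :=
    fun x => (hK x).neg.exp
  have hEc : Continuous fun t => exp (-K t) :=
    continuous_iff_continuousAt.2 fun x => (hE x).continuousAt
  have hmE : Continuous fun s => m s * exp (-K s) := hm.mul hEc
  set V : ℝ → ℝ := fun t => W t * exp (-K t) - ∫ s in t₀..t, m s * exp (-K s)
  have hV : AntitoneOn V (Icc t₀ t₁) := by
    refine antitoneOn_of_hasDerivWithinAt_nonpos (convex_Icc t₀ t₁)
      (f' := fun x => (W' x - (k x * W x + m x)) * exp (-K x))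
      ((hW.mul hEc.continuousOn).sub
        (continuous_primitive (fun _ _ => hmE.intervalIntegrable _ _) t₀).continuousOn) ?_ ?_
    · rw [interior_Icc]
      intro x hx
      exact (((hW' x hx).mul (hE x)).sub
        (hmE.integral_hasStrictDerivAt t₀ x).hasDerivAt |>.congr_deriv (by ring)).hasDerivWithinAt
    · rw [interior_Icc]
      intro x hx
      exact mul_nonpos_of_nonpos_of_nonneg (sub_nonpos.2 (hle x hx)) (exp_pos _).le
  have hVt : V t₁ ≤ W t₀ := by
    simpa [V, K] using hV (left_mem_Icc.2 ht) (right_mem_Icc.2 ht) ht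
  have hshift : ∀ s, exp (-K s) * exp (K t₁) = exp (∫ r in s..t₁, k r) := fun s => by
    rw [← exp_add, ← integral_interval_sub_left (a := t₀) (hk.intervalIntegrable _ _)
      (hk.intervalIntegrable _ _), neg_add_eq_sub]
  calc W t₁ = W t₁ * exp (-K t₁) * exp (K t₁) := by
        rw [mul_assoc, hshift, integral_same, exp_zero, mul_one]
    _ ≤ (W t₀ + ∫ s in t₀..t₁, m s * exp (-K s)) * exp (K t₁) := by
      gcongr; linarith
    _ = _ := by
      simp_rw [add_mul, ← integral_mul_const, mul_assoc, hshift, K]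

theorem rpow_one_sub_le_of_hasDerivAt_le_bernoulli {Z Z' a b : ℝ → ℝ} {α t₀ t₁ : ℝ}
    (hα : α < 1) (ht : t₀ ≤ t₁) (ha : Continuous a) (hb : Continuous b)
    (hZ : ContinuousOn Z (Icc t₀ t₁)) (hZ' : ∀ x ∈ Ioo t₀ t₁, HasDerivAt Z (Z' x) x)
    (hpos : ∀ x ∈ Ioo t₀ t₁, 0 < Z x)
    (hle : ∀ x ∈ Ioo t₀ t₁, Z' x ≤ a x * Z x + b x * Z x ^ α) :
    Z t₁ ^ (1 - α) ≤ Z t₀ ^ (1 - α) * exp ((1 - α) * ∫ s in t₀..t₁, a s) +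
      (1 - α) * ∫ s in t₀..t₁, b s * exp ((1 - α) * ∫ r in s..t₁, a r) := by
  have hβ : 0 < 1 - α := sub_pos.2 hα
  have key : ∀ x ∈ Ioo t₀ t₁,
      Z' x * (1 - α) * Z x ^ (1 - α - 1) ≤ (1 - α) * a x * Z x ^ (1 - α) + (1 - α) * b x := by
    intro x hx
    have hZx := hpos x hx
    have hlin : Z x * Z x ^ (1 - α - 1) = Z x ^ (1 - α) := by
      rw [← rpow_one_add' hZx.le (by linarith)]; ring_nf
    have hcancel : Z x ^ α * Z x ^ (1 - α - 1) = 1 := by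
      rw [← rpow_add hZx]; norm_num
    calc Z' x * (1 - α) * Z x ^ (1 - α - 1)
        ≤ (a x * Z x + b x * Z x ^ α) * (1 - α) * Z x ^ (1 - α - 1) := by
          gcongr; exact hle x hx
      _ = (1 - α) * a x * Z x ^ (1 - α) + (1 - α) * b x := by
          linear_combination (1 - α) * a x * hlin + (1 - α) * b x * hcancel
  have := le_exp_integral_add_integral_of_hasDerivAt_le (k := fun x => (1 - α) * a x)
    (m := fun x => (1 - α) * b x) ht (continuous_const.mul ha)
    (continuous_const.mul hb) (hZ.rpow_const fun _ _ => Or.inr hβ.le)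
    (fun x hx => (hZ' x hx).rpow_const (Or.inl (hpos x hx).ne')) key
  simpa only [integral_const_mul, mul_assoc] using this

theorem le_of_le_add_integral_mul_add_mul_rpow_of_pos {a b Y : ℝ → ℝ} {c α t₀ : ℝ}
    (ha : Continuous a) (hb : Continuous b) (hY : Continuous Y) (ha0 : ∀ t, 0 ≤ a t)
    (hb0 : ∀ t, 0 ≤ b t) (hY0 : ∀ t, 0 ≤ Y t) (hc : 0 < c) (hα0 : 0 ≤ α) (hα1 : α < 1)
    (h : ∀ t ≥ t₀, Y t ≤ c + ∫ s in t₀..t, (a s * Y s + b s * Y s ^ α)) {t : ℝ} (ht : t₀ ≤ t) :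
    Y t ≤ (c ^ (1 - α) * exp ((1 - α) * ∫ s in t₀..t, a s) +
      (1 - α) * ∫ s in t₀..t, b s * exp ((1 - α) * ∫ r in s..t, a r)) ^ ((1 : ℝ) / (1 - α)) := by
  set f : ℝ → ℝ := fun s => a s * Y s + b s * Y s ^ α
  have hf : Continuous f := (ha.mul hY).add (hb.mul (hY.rpow_const fun _ => Or.inr hα0))
  set Z : ℝ → ℝ := fun t => c + ∫ s in t₀..t, f s
  have hZ' : ∀ x, HasDerivAt Z (f x) x :=
    fun x => (hf.integral_hasStrictDerivAt t₀ x).hasDerivAt.const_add c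
  have hZpos : ∀ x ≥ t₀, 0 < Z x := fun x hx =>
    add_pos_of_pos_of_nonneg hc <| integral_nonneg hx fun s _ =>
      add_nonneg (mul_nonneg (ha0 s) (hY0 s)) (mul_nonneg (hb0 s) (rpow_nonneg (hY0 s) α))
  have hfZ : ∀ x ≥ t₀, f x ≤ a x * Z x + b x * Z x ^ α := fun x hx =>
    add_le_add (mul_le_mul_of_nonneg_left (h x hx) (ha0 x))
      (mul_le_mul_of_nonneg_left (rpow_le_rpow (hY0 x) (h x hx) hα0) (hb0 x))
  have hbern := rpow_one_sub_le_of_hasDerivAt_le_bernoulli hα1 ht ha hb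
    (continuous_iff_continuousAt.2 fun x => (hZ' x).continuousAt).continuousOn
    (fun x _ => hZ' x) (fun x hx => hZpos x hx.1.le) (fun x hx => hfZ x hx.1.le)
  have hZt₀ : Z t₀ = c := by simp [Z]
  rw [hZt₀] at hbern
  calc Y t ≤ Z t := h t ht
    _ = (Z t ^ (1 - α)) ^ ((1 : ℝ) / (1 - α)) := by
      rw [one_div, rpow_rpow_inv (hZpos t ht).le (sub_pos.2 hα1).ne']
    _ ≤ _ := by
      gcongr
      exact rpow_nonneg (hZpos t ht).le _

open Filter Topology in
theorem stmt_8 (a b Y : ℝ → ℝ) (ha : Continuous a) (hb : Continuous b)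
    (hY : Continuous Y) (ha0 : ∀ t, 0 ≤ a t) (hb0 : ∀ t, 0 ≤ b t)
    (hY0 : ∀ t, 0 ≤ Y t) (c α t₀ : ℝ) (hc : 0 ≤ c) (hα0 : 0 ≤ α) (hα1 : α < 1)
    (h : ∀ t ≥ t₀, Y t ≤ c + ∫ s in t₀..t, (a s * Y s + b s * Y s ^ α)) :
    ∀ t ≥ t₀,
      Y t ≤ (c ^ (1 - α) * Real.exp ((1 - α) * ∫ s in t₀..t, a s) +
        (1 - α) * ∫ s in t₀..t, b s * Real.exp ((1 - α) * ∫ r in s..t, a r)) ^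
          ((1 : ℝ) / (1 - α)) := by
  intro t ht
  set bound : ℝ → ℝ := fun x => (x ^ (1 - α) * exp ((1 - α) * ∫ s in t₀..t, a s) +
    (1 - α) * ∫ s in t₀..t, b s * exp ((1 - α) * ∫ r in s..t, a r)) ^ ((1 : ℝ) / (1 - α))
  have hβ : 0 < 1 - α := sub_pos.2 hα1
  have hbound : ContinuousAt bound c :=
    ((continuousAt_rpow_const c _ (Or.inr hβ.le)).mul continuousAt_const |>.add
      continuousAt_const).rpow_const (Or.inr (one_div_nonneg.2 hβ.le))
  refine ge_of_tendsto (hbound.tendsto.mono_left nhdsWithin_le_nhds : Tendsto bound (𝓝[>] c) _) ?_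
  filter_upwards [self_mem_nhdsWithin] with x (hx : c < x)
  exact le_of_le_add_integral_mul_add_mul_rpow_of_pos ha hb hY ha0 hb0 hY0 (hc.trans_lt hx) hα0 hα1
    (fun s hs => (h s hs).trans (by linarith)) ht
end

section
/- Logarithmic Gronwall inequality: Let X, a, M, c₁, c₂ : [0,∞) → ℝ be nonnegative functions with X, c₁, c₂ continuous, M monotone increasing with M(0) ≥ 1, and c₁, c₂ integrable on finite intervals. Assume that for all t ≥ 0, X(t) + a(t) ≤ M(t) + ∫_0^t c₁(s)·X(s) ds + ∫_0^t c₂(s)·X(s)·log X(s) ds, where all integrals are finite. Then for all t ≥ 0, X(t) + a(t) ≤ M(t)^{exp(C₂(t))} · exp( exp(C₂(t)) · ∫_0^t c₁(s)·exp(−C₂(s)) ds ), where C₂(t) := ∫_0^t c₂(s) ds. -/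
open intervalIntegral

theorem stmt_9 (X a M c₁ c₂ : ℝ → ℝ)
    (hX : Continuous X) (hc₁ : Continuous c₁) (hc₂ : Continuous c₂)
    (hX0 : ∀ t ≥ 0, 0 ≤ X t) (ha0 : ∀ t ≥ 0, 0 ≤ a t)
    (hM0 : ∀ t ≥ 0, 0 ≤ M t) (hc₁0 : ∀ t ≥ 0, 0 ≤ c₁ t) (hc₂0 : ∀ t ≥ 0, 0 ≤ c₂ t)
    (hM : MonotoneOn M (Set.Ici 0)) (hM1 : 1 ≤ M 0)
    (hint₁ : ∀ t ≥ 0, IntervalIntegrable c₁ MeasureTheory.volume 0 t)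
    (hint₂ : ∀ t ≥ 0, IntervalIntegrable c₂ MeasureTheory.volume 0 t)
    (h : ∀ t ≥ 0, X t + a t ≤ M t + (∫ s in (0:ℝ)..t, c₁ s * X s) +
      ∫ s in (0:ℝ)..t, c₂ s * X s * Real.log (X s)) :
    ∀ t ≥ 0,
      X t + a t ≤ M t ^ Real.exp (∫ s in (0:ℝ)..t, c₂ s) *
        Real.exp (Real.exp (∫ s in (0:ℝ)..t, c₂ s) *
          ∫ s in (0:ℝ)..t, c₁ s * Real.exp (-∫ r in (0:ℝ)..s, c₂ r)) := by
  intro T hT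
  -- auxiliary functions
  set g : ℝ → ℝ := fun s => max (c₂ s * X s * Real.log (X s)) 0 with hg_def
  have hcXlog : Continuous (fun s => c₂ s * X s * Real.log (X s)) := by
    have : Continuous (fun s => c₂ s * (X s * Real.log (X s))) :=
      hc₂.mul (Real.continuous_mul_log.comp hX)
    simpa [mul_assoc] using this
  have hg_cont : Continuous g := hcXlog.max continuous_const
  have hcX : Continuous (fun s => c₁ s * X s) := hc₁.mul hX
  set F : ℝ → ℝ := fun u => M T + (∫ s in (0:ℝ)..u, c₁ s * X s) + ∫ s in (0:ℝ)..u, g s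
    with hF_def
  set C : ℝ → ℝ := fun u => ∫ r in (0:ℝ)..u, c₂ r with hC_def
  have hC_deriv : ∀ u, HasDerivAt C (c₂ u) u := fun u =>
    intervalIntegral.integral_hasDerivAt_right (hc₂.intervalIntegrable _ _)
      (hc₂.stronglyMeasurableAtFilter _ _) hc₂.continuousAt
  have hC_cont : Continuous C := by
    rw [continuous_iff_continuousAt]; exact fun u => (hC_deriv u).continuousAt
  have hF_deriv : ∀ u, HasDerivAt F (c₁ u * X u + g u) u := by
    intro u
    have h1 : HasDerivAt (fun t => ∫ s in (0:ℝ)..t, c₁ s * X s) (c₁ u * X u) u :=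
      intervalIntegral.integral_hasDerivAt_right (hcX.intervalIntegrable _ _)
        (hcX.stronglyMeasurableAtFilter _ _) hcX.continuousAt
    have h2 : HasDerivAt (fun t => ∫ s in (0:ℝ)..t, g s) (g u) u :=
      intervalIntegral.integral_hasDerivAt_right (hg_cont.intervalIntegrable _ _)
        (hg_cont.stronglyMeasurableAtFilter _ _) hg_cont.continuousAt
    exact (h1.const_add (M T)).add h2
  have hF_cont : Continuous F := by
    rw [continuous_iff_continuousAt]; exact fun u => (hF_deriv u).continuousAt
  have hMT1 : 1 ≤ M T := le_trans hM1 (hM (Set.self_mem_Ici) hT hT)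
  -- F ≥ 1 on [0,∞)
  have hF1 : ∀ u, 0 ≤ u → 1 ≤ F u := by
    intro u hu
    have i1 : 0 ≤ ∫ s in (0:ℝ)..u, c₁ s * X s :=
      intervalIntegral.integral_nonneg hu fun s hs =>
        mul_nonneg (hc₁0 s hs.1) (hX0 s hs.1)
    have i2 : 0 ≤ ∫ s in (0:ℝ)..u, g s :=
      intervalIntegral.integral_nonneg hu fun s _ => le_max_right _ _
    have : 1 + 0 + 0 ≤ F u := add_le_add (add_le_add hMT1 i1) i2
    linarith
  -- X + a ≤ F on [0, T]
  have hXaF : ∀ u ∈ Set.Icc (0:ℝ) T, X u + a u ≤ F u := by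
    intro u hu
    have hMu : M u ≤ M T := hM hu.1 hT hu.2
    have hIu : (∫ s in (0:ℝ)..u, c₂ s * X s * Real.log (X s)) ≤ ∫ s in (0:ℝ)..u, g s :=
      intervalIntegral.integral_mono_on hu.1 (hcXlog.intervalIntegrable _ _)
        (hg_cont.intervalIntegrable _ _) fun s _ => le_max_left _ _
    calc X u + a u ≤ M u + (∫ s in (0:ℝ)..u, c₁ s * X s) +
          ∫ s in (0:ℝ)..u, c₂ s * X s * Real.log (X s) := h u hu.1
      _ ≤ F u := by simp only [hF_def]; linarith
  have hXF : ∀ u ∈ Set.Icc (0:ℝ) T, X u ≤ F u := by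
    intro u hu
    have := ha0 u hu.1
    linarith [hXaF u hu]
  -- H function
  set H : ℝ → ℝ := fun u =>
    Real.exp (-C u) * Real.log (F u) - ∫ s in (0:ℝ)..u, c₁ s * Real.exp (-C s) with hH_def
  have hcE : Continuous (fun s => c₁ s * Real.exp (-C s)) :=
    hc₁.mul (Real.continuous_exp.comp hC_cont.neg)
  have hH_deriv : ∀ u, 0 ≤ u →
      HasDerivAt H (Real.exp (-C u) * (-(c₂ u)) * Real.log (F u) +
        Real.exp (-C u) * ((c₁ u * X u + g u) / F u) - c₁ u * Real.exp (-C u)) u := by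
    intro u hu
    have hFpos : (0:ℝ) < F u := lt_of_lt_of_le one_pos (hF1 u hu)
    have d1 : HasDerivAt (fun v => Real.exp (-C v)) (Real.exp (-C u) * (-(c₂ u))) u :=
      (hC_deriv u).neg.exp
    have d2 : HasDerivAt (fun v => Real.log (F v)) ((c₁ u * X u + g u) / F u) u :=
      (hF_deriv u).log (ne_of_gt hFpos)
    have d3 : HasDerivAt (fun v => ∫ s in (0:ℝ)..v, c₁ s * Real.exp (-C s))
        (c₁ u * Real.exp (-C u)) u :=
      intervalIntegral.integral_hasDerivAt_right (hcE.intervalIntegrable _ _)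
        (hcE.stronglyMeasurableAtFilter _ _) hcE.continuousAt
    exact ((d1.mul d2).sub d3)
  -- H is antitone on [0,T]
  have hH_anti : AntitoneOn H (Set.Icc 0 T) := by
    have hint : interior (Set.Icc (0:ℝ) T) = Set.Ioo 0 T := interior_Icc
    apply antitoneOn_of_deriv_nonpos (convex_Icc 0 T)
    · -- continuity
      apply ContinuousOn.sub
      · apply ContinuousOn.mul ((Real.continuous_exp.comp hC_cont.neg).continuousOn)
        exact ContinuousOn.log hF_cont.continuousOn fun u hu =>
          ne_of_gt (lt_of_lt_of_le one_pos (hF1 u hu.1))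
      · exact Continuous.continuousOn (by
          rw [continuous_iff_continuousAt]
          intro u
          exact (intervalIntegral.integral_hasDerivAt_right (hcE.intervalIntegrable _ _)
            (hcE.stronglyMeasurableAtFilter _ _) hcE.continuousAt).continuousAt)
    · rw [hint]
      intro u hu
      exact (hH_deriv u hu.1.le).differentiableAt.differentiableWithinAt
    · rw [hint]
      intro u hu
      rw [(hH_deriv u hu.1.le).deriv]
      have huI : u ∈ Set.Icc (0:ℝ) T := ⟨hu.1.le, hu.2.le⟩
      have hu0 : (0:ℝ) ≤ u := hu.1.le
      have hF1u : 1 ≤ F u := hF1 u hu0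
      have hFpos : (0:ℝ) < F u := lt_of_lt_of_le one_pos hF1u
      have hlogF : 0 ≤ Real.log (F u) := Real.log_nonneg hF1u
      have hXu : X u ≤ F u := hXF u huI
      have hX0u : 0 ≤ X u := hX0 u hu0
      have hc₂u : 0 ≤ c₂ u := hc₂0 u hu0
      -- key: c₁ X + g ≤ c₁ F + c₂ F log F
      have hkey : c₁ u * X u + g u ≤ c₁ u * F u + c₂ u * F u * Real.log (F u) := by
        have h1 : c₁ u * X u ≤ c₁ u * F u :=
          mul_le_mul_of_nonneg_left hXu (hc₁0 u hu0)
        have hXlog : X u * Real.log (X u) ≤ F u * Real.log (F u) := by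
          rcases le_or_gt (X u) 1 with hx | hx
          · have : X u * Real.log (X u) ≤ 0 :=
              mul_nonpos_of_nonneg_of_nonpos hX0u (Real.log_nonpos hX0u hx)
            exact this.trans (mul_nonneg (le_trans zero_le_one hF1u) hlogF)
          · exact mul_le_mul hXu (Real.log_le_log (lt_trans one_pos hx) hXu)
              (Real.log_nonneg hx.le) hFpos.le
        have h2 : g u ≤ c₂ u * F u * Real.log (F u) := by
          apply max_le
          · calc c₂ u * X u * Real.log (X u) = c₂ u * (X u * Real.log (X u)) := by ring
              _ ≤ c₂ u * (F u * Real.log (F u)) := mul_le_mul_of_nonneg_left hXlog hc₂u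
              _ = c₂ u * F u * Real.log (F u) := by ring
          · exact mul_nonneg (mul_nonneg hc₂u hFpos.le) hlogF
        linarith
      have hdiv : (c₁ u * X u + g u) / F u ≤ c₁ u + c₂ u * Real.log (F u) := by
        rw [div_le_iff₀ hFpos]
        calc c₁ u * X u + g u ≤ c₁ u * F u + c₂ u * F u * Real.log (F u) := hkey
          _ = (c₁ u + c₂ u * Real.log (F u)) * F u := by ring
      have hE : (0:ℝ) < Real.exp (-C u) := Real.exp_pos _
      have := mul_le_mul_of_nonneg_left hdiv hE.le
      nlinarith [Real.exp_pos (-C u)]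
  -- evaluate H at 0 and T
  have hHT_le_H0 : H T ≤ H 0 := hH_anti ⟨le_rfl, hT⟩ ⟨hT, le_rfl⟩ hT
  have hC0 : C 0 = 0 := by simp [hC_def]
  have hF0 : F 0 = M T := by simp [hF_def]
  have hH0 : H 0 = Real.log (M T) := by
    simp [hH_def, hC0, hF0]
  have hstep : Real.exp (-C T) * Real.log (F T) - (∫ s in (0:ℝ)..T, c₁ s * Real.exp (-C s))
      ≤ Real.log (M T) := by rw [← hH0]; exact hHT_le_H0
  -- unwind
  have hEc : (0:ℝ) < Real.exp (C T) := Real.exp_pos _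
  have hlogFT : Real.log (F T) ≤
      Real.exp (C T) * (Real.log (M T) + ∫ s in (0:ℝ)..T, c₁ s * Real.exp (-C s)) := by
    have h1 : Real.exp (-C T) * Real.log (F T) ≤
        Real.log (M T) + ∫ s in (0:ℝ)..T, c₁ s * Real.exp (-C s) := by linarith
    have h2 := mul_le_mul_of_nonneg_left h1 hEc.le
    have hee : Real.exp (C T) * (Real.exp (-C T) * Real.log (F T)) = Real.log (F T) := by
      rw [← mul_assoc, ← Real.exp_add]
      simp
    rw [hee] at h2
    exact h2
  have hFT_pos : (0:ℝ) < F T := lt_of_lt_of_le one_pos (hF1 T hT)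
  have hMT_pos : (0:ℝ) < M T := lt_of_lt_of_le one_pos hMT1
  have hfinal : F T ≤ M T ^ Real.exp (C T) *
      Real.exp (Real.exp (C T) * ∫ s in (0:ℝ)..T, c₁ s * Real.exp (-C s)) := by
    have := Real.exp_le_exp.2 hlogFT
    rw [Real.exp_log hFT_pos] at this
    calc F T ≤ Real.exp (Real.exp (C T) *
          (Real.log (M T) + ∫ s in (0:ℝ)..T, c₁ s * Real.exp (-C s))) := this
      _ = Real.exp (Real.log (M T) * Real.exp (C T)) *
          Real.exp (Real.exp (C T) * ∫ s in (0:ℝ)..T, c₁ s * Real.exp (-C s)) := by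
            rw [← Real.exp_add]; ring_nf
      _ = M T ^ Real.exp (C T) *
          Real.exp (Real.exp (C T) * ∫ s in (0:ℝ)..T, c₁ s * Real.exp (-C s)) := by
            rw [Real.rpow_def_of_pos hMT_pos]
  calc X T + a T ≤ F T := hXaF T ⟨hT, le_rfl⟩
    _ ≤ _ := hfinal
end

section
/- Differential inequality step in the log-Gronwall lemma: let c₁, c₂ : [0,T] → ℝ be nonnegative continuous functions and Y : [0,T] → ℝ a differentiable function with Y(t) ≥ 1 for all t, satisfying Y'(t) ≤ c₁(t)·Y(t) + c₂(t)·Y(t)·log Y(t) for all t ∈ [0,T]. Then for all t ∈ [0,T], log Y(t) ≤ exp(C₂(t))·[ log Y(0) + ∫_0^t c₁(s)·exp(−C₂(s)) ds ], where C₂(t) = ∫_0^t c₂(s) ds. -/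
open intervalIntegral

theorem stmt_10 (T : ℝ) (hT : 0 ≤ T) (c₁ c₂ Y Y' : ℝ → ℝ)
    (hc₁ : Continuous c₁) (hc₂ : Continuous c₂)
    (hc₁0 : ∀ t ∈ Set.Icc 0 T, 0 ≤ c₁ t) (hc₂0 : ∀ t ∈ Set.Icc 0 T, 0 ≤ c₂ t)
    (hY : ∀ t ∈ Set.Icc 0 T, HasDerivAt Y (Y' t) t)
    (hY1 : ∀ t ∈ Set.Icc 0 T, 1 ≤ Y t)
    (hineq : ∀ t ∈ Set.Icc 0 T, Y' t ≤ c₁ t * Y t + c₂ t * Y t * Real.log (Y t)) :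
    ∀ t ∈ Set.Icc 0 T,
      Real.log (Y t) ≤ Real.exp (∫ s in (0:ℝ)..t, c₂ s) *
        (Real.log (Y 0) + ∫ s in (0:ℝ)..t, c₁ s * Real.exp (-∫ r in (0:ℝ)..s, c₂ r)) := by
  set C₂ : ℝ → ℝ := fun t => ∫ s in (0:ℝ)..t, c₂ s with hC₂def
  have hC₂ : ∀ t, HasDerivAt C₂ (c₂ t) t := fun t =>
    intervalIntegral.integral_hasDerivAt_right (hc₂.intervalIntegrable 0 t)
      (hc₂.stronglyMeasurableAtFilter _ _) hc₂.continuousAt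
  have hC₂cont : Continuous C₂ :=
    continuous_iff_continuousAt.2 fun t => (hC₂ t).continuousAt
  set g : ℝ → ℝ := fun s => c₁ s * Real.exp (-C₂ s) with hgdef
  have hgcont : Continuous g := hc₁.mul (Real.continuous_exp.comp hC₂cont.neg)
  set G : ℝ → ℝ := fun t => ∫ s in (0:ℝ)..t, g s with hGdef
  have hG : ∀ t, HasDerivAt G (g t) t := fun t =>
    intervalIntegral.integral_hasDerivAt_right (hgcont.intervalIntegrable 0 t)
      (hgcont.stronglyMeasurableAtFilter _ _) hgcont.continuousAt
  set W : ℝ → ℝ := fun t => Real.exp (-C₂ t) * Real.log (Y t) - G t with hWdef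
  have hW : ∀ t ∈ Set.Icc (0:ℝ) T, HasDerivAt W
      (Real.exp (-C₂ t) * (-(c₂ t)) * Real.log (Y t)
        + Real.exp (-C₂ t) * (Y' t / Y t) - g t) t := by
    intro t ht
    have hYpos : (0:ℝ) < Y t := lt_of_lt_of_le one_pos (hY1 t ht)
    have h1 : HasDerivAt (fun u => Real.exp (-C₂ u)) (Real.exp (-C₂ t) * (-(c₂ t))) t :=
      (hC₂ t).neg.exp
    have h2 : HasDerivAt (fun u => Real.log (Y u)) (Y' t / Y t) t := (hY t ht).log hYpos.ne'
    exact (h1.mul h2).sub (hG t)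
  have hWle : ∀ t ∈ Set.Icc (0:ℝ) T,
      Real.exp (-C₂ t) * (-(c₂ t)) * Real.log (Y t)
        + Real.exp (-C₂ t) * (Y' t / Y t) - g t ≤ 0 := by
    intro t ht
    have hYpos : (0:ℝ) < Y t := lt_of_lt_of_le one_pos (hY1 t ht)
    have hdiv : Y' t / Y t ≤ c₁ t + c₂ t * Real.log (Y t) := by
      rw [div_le_iff₀ hYpos]
      calc Y' t ≤ c₁ t * Y t + c₂ t * Y t * Real.log (Y t) := hineq t ht
        _ = (c₁ t + c₂ t * Real.log (Y t)) * Y t := by ring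
    have hexp : (0:ℝ) < Real.exp (-C₂ t) := Real.exp_pos _
    have : Real.exp (-C₂ t) * (Y' t / Y t - c₂ t * Real.log (Y t) - c₁ t) ≤ 0 :=
      mul_nonpos_of_nonneg_of_nonpos hexp.le (by linarith)
    simp only [hgdef]
    nlinarith
  have hanti : AntitoneOn W (Set.Icc 0 T) := by
    apply antitoneOn_of_hasDerivWithinAt_nonpos (convex_Icc 0 T)
    · intro t ht
      exact (hW t ht).continuousAt.continuousWithinAt
    · intro t ht
      exact (hW t (interior_subset ht)).hasDerivWithinAt
    · intro t ht
      exact hWle t (interior_subset ht)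
  intro t ht
  have h0 : (0:ℝ) ∈ Set.Icc (0:ℝ) T := ⟨le_refl _, hT⟩
  have := hanti h0 ht ht.1
  have hW0 : W 0 = Real.log (Y 0) := by
    simp [hWdef, hGdef, hC₂def, intervalIntegral.integral_same]
  rw [hW0] at this
  have hkey : Real.exp (-C₂ t) * Real.log (Y t) ≤ Real.log (Y 0) + G t := by
    simpa [hWdef, sub_le_iff_le_add] using this
  have hmul : Real.exp (C₂ t) * Real.exp (-C₂ t) = 1 := by
    rw [← Real.exp_add]; simp
  have hexp : (0:ℝ) < Real.exp (C₂ t) := Real.exp_pos _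
  have := mul_le_mul_of_nonneg_left hkey hexp.le
  calc Real.log (Y t) = Real.exp (C₂ t) * Real.exp (-C₂ t) * Real.log (Y t) := by
        rw [hmul, one_mul]
    _ = Real.exp (C₂ t) * (Real.exp (-C₂ t) * Real.log (Y t)) := by ring
    _ ≤ Real.exp (C₂ t) * (Real.log (Y 0) + G t) := this
end

section
/- Define ρ : [0,∞) → ℝ by ρ(x) = x/e for 0 ≤ x ≤ e and ρ(x) = log x for x ≥ e, and define Φ : [0,∞) → ℝ by Φ(z) = exp( ∫_0^z 1/(1 + x + x·ρ(x)) dx ). Then Φ is differentiable with Φ'(z) = Φ(z)/(1 + z + z·ρ(z)) for all z ≥ 0, Φ is concave on [0,∞), and Φ(z) → ∞ as z → ∞. -/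
/-!
Write `g x = 1 + x + x ρ(x)`, so that `Φ = exp ∫₀ᶻ 1 / g` and `Φ' = Φ / g`.
Since `ρ ≥ 0` is nondecreasing on `[0, ∞)`, so is `g x - x = 1 + x ρ(x)`; hence
`g t ≥ g x + (t - x)` for `t ≥ x`, and comparing with the derivative of `log (g x - x + t)` gives
`∫ₓʸ 1 / g ≤ log (g y) - log (g x)`. This says exactly that `Φ' = exp (∫₀ᶻ 1 / g - log g)` is
antitone, i.e. `Φ` is concave. For `x ≥ e` we have `g x ≤ 3 x log x`, so `∫₀ᶻ 1 / g` grows at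
least like `log (log z) / 3`.
-/

noncomputable def ρ (x : ℝ) : ℝ :=
  if x ≤ Real.exp 1 then x / Real.exp 1 else Real.log x

noncomputable def Φ (z : ℝ) : ℝ :=
  Real.exp (∫ x in (0:ℝ)..z, 1 / (1 + x + x * ρ x))

open Real Set Filter intervalIntegral MeasureTheory

section
variable {g : ℝ → ℝ}

lemma continuousOn_one_div_of_pos (hg : Continuous g) (hpos : ∀ t, 0 ≤ t → 0 < g t) :
    ContinuousOn (fun t => 1 / g t) (Ici 0) :=
  continuousOn_const.div hg.continuousOn fun t ht => (hpos t ht).ne'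

lemma intervalIntegrable_one_div_of_pos (hg : Continuous g) (hpos : ∀ t, 0 ≤ t → 0 < g t)
    {a b : ℝ} (ha : 0 ≤ a) (hb : 0 ≤ b) : IntervalIntegrable (fun t => 1 / g t) volume a b :=
  ((continuousOn_one_div_of_pos hg hpos).mono
    fun _ ht => (le_inf ha hb).trans ht.1).intervalIntegrable

lemma hasDerivAt_exp_integral_one_div (hg : Continuous g) (hpos : ∀ t, 0 ≤ t → 0 < g t)
    {z : ℝ} (hz : 0 ≤ z) :
    HasDerivAt (fun z => exp (∫ x in 0..z, 1 / g x)) (exp (∫ x in 0..z, 1 / g x) / g z) z := by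
  have hmeas : StronglyMeasurableAtFilter (fun t => 1 / g t) (nhds z) :=
    (measurable_const.div hg.measurable).stronglyMeasurable.stronglyMeasurableAtFilter
  have hcont : ContinuousAt (fun t => 1 / g t) z :=
    continuousAt_const.div hg.continuousAt (hpos z hz).ne'
  have hint := intervalIntegrable_one_div_of_pos hg hpos le_rfl hz
  simpa only [mul_one_div] using (integral_hasDerivAt_right hint hmeas hcont).exp

lemma integral_one_div_le_log_sub (hg : Continuous g) (hpos : ∀ t, 0 ≤ t → 0 < g t)
    (hmono : MonotoneOn (fun t => g t - t) (Ici 0)) {x y : ℝ} (hx : 0 ≤ x) (hxy : x ≤ y) :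
    ∫ t in x..y, 1 / g t ≤ log (g y) - log (g x) := by
  set c := g x - x
  have hle : ∀ t ∈ Icc x y, c + t ≤ g t := fun t ht => by
    linarith [hmono hx (hx.trans ht.1) ht.1]
  have hc_pos : ∀ t ∈ Icc x y, 0 < c + t := fun t ht => by
    linarith [hpos x hx, ht.1]
  calc ∫ t in x..y, 1 / g t ≤ log (c + y) - log (c + x) := by
        refine integral_le_sub_of_hasDeriv_right_of_le (g := fun t => log (c + t))
          (g' := fun t => 1 / (c + t)) hxy ?_ (fun t ht => ?_) ?_ (fun t ht => ?_)
        · exact (continuousOn_const.add continuousOn_id).log fun t ht => (hc_pos t ht).ne'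
        · exact (((hasDerivAt_id t).const_add c).log
            (hc_pos t (Ioo_subset_Icc_self ht)).ne').hasDerivWithinAt
        · exact ((continuousOn_one_div_of_pos hg hpos).mono
            fun t ht => hx.trans ht.1).integrableOn_Icc
        · exact one_div_le_one_div_of_le (hc_pos t (Ioo_subset_Icc_self ht))
            (hle t (Ioo_subset_Icc_self ht))
    _ ≤ log (g y) - log (g x) := by
        rw [show c + x = g x by ring]
        gcongr
        exacts [hc_pos y ⟨hxy, le_rfl⟩, hle y ⟨hxy, le_rfl⟩]

lemma concaveOn_exp_integral_one_div (hg : Continuous g) (hpos : ∀ t, 0 ≤ t → 0 < g t)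
    (hmono : MonotoneOn (fun t => g t - t) (Ici 0)) :
    ConcaveOn ℝ (Ici 0) (fun z => exp (∫ x in 0..z, 1 / g x)) := by
  have hderiv := fun z (hz : 0 ≤ z) => hasDerivAt_exp_integral_one_div hg hpos hz
  refine AntitoneOn.concaveOn_of_deriv (convex_Ici 0)
    (fun z hz => (hderiv z hz).continuousAt.continuousWithinAt) ?_ ?_ <;> rw [interior_Ici]
  · exact fun z hz => (hderiv z (le_of_lt hz)).differentiableAt.differentiableWithinAt
  intro x hx y hy hxy
  have hlog := integral_one_div_le_log_sub hg hpos hmono hx.le hxy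
  rw [← integral_interval_sub_left (intervalIntegrable_one_div_of_pos hg hpos le_rfl hy.le)
    (intervalIntegrable_one_div_of_pos hg hpos le_rfl hx.le)] at hlog
  rw [(hderiv y hy.le).deriv, (hderiv x hx.le).deriv, ← exp_log (hpos y hy.le),
    ← exp_log (hpos x hx.le), ← exp_sub, ← exp_sub, exp_le_exp]
  linarith

end

lemma continuous_ρ : Continuous ρ := by
  have hρ : ρ = fun x => if x ≤ exp 1 then x / exp 1 else log (max x (exp 1)) := by
    ext x
    unfold ρ
    split_ifs with h
    · rfl
    · rw [max_eq_left (not_le.1 h).le]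
  rw [hρ]
  refine Continuous.if_le (continuous_id.div_const _)
    ((continuous_id.max continuous_const).log fun x => ?_) continuous_id continuous_const ?_
  · exact ((exp_pos 1).trans_le (le_max_right x _)).ne'
  · rintro x rfl
    simp

lemma monotone_ρ : Monotone ρ := by
  intro x y hxy
  unfold ρ
  split_ifs with hx hy hy
  · gcongr
  · calc x / exp 1 ≤ 1 := (div_le_one (exp_pos 1)).2 hx
      _ = log (exp 1) := (log_exp 1).symm
      _ ≤ log y := log_le_log (exp_pos 1) (not_le.1 hy).le
  · exact absurd (hxy.trans hy) hx
  · exact log_le_log ((exp_pos 1).trans (not_le.1 hx)) hxy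

lemma ρ_nonneg {x : ℝ} (hx : 0 ≤ x) : 0 ≤ ρ x := by
  simpa [ρ, (exp_pos 1).le] using monotone_ρ hx

lemma ρ_of_exp_one_lt {x : ℝ} (hx : exp 1 < x) : ρ x = log x := if_neg (not_le.2 hx)

lemma continuous_one_add_add_mul_ρ : Continuous fun x => 1 + x + x * ρ x := by
  have := continuous_ρ
  fun_prop

lemma one_add_add_mul_ρ_pos {x : ℝ} (hx : 0 ≤ x) : 0 < 1 + x + x * ρ x := by
  nlinarith [mul_nonneg hx (ρ_nonneg hx)]

lemma monotoneOn_one_add_add_mul_ρ_sub :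
    MonotoneOn (fun x => 1 + x + x * ρ x - x) (Ici 0) := by
  intro x hx y hy hxy
  dsimp only
  linarith [mul_le_mul hxy (monotone_ρ hxy) (ρ_nonneg hx) hy]

lemma log_log_div_three_le_integral {z : ℝ} (hz : exp 1 ≤ z) :
    log (log z) / 3 ≤ ∫ x in exp 1..z, 1 / (1 + x + x * ρ x) := by
  have hlog : ∀ t ∈ Icc (exp 1) z, 0 < t ∧ 1 ≤ log t := fun t ht =>
    ⟨(exp_pos 1).trans_le ht.1, (le_log_iff_exp_le ((exp_pos 1).trans_le ht.1)).2 ht.1⟩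
  have := sub_le_integral_of_hasDeriv_right_of_le (g := fun t => log (log t) / 3)
    (g' := fun t => t⁻¹ / log t / 3) (φ := fun x => 1 / (1 + x + x * ρ x)) hz ?_
    (fun t ht => ?_) ?_ (fun t ht => ?_)
  · simpa using this
  · refine ContinuousOn.div_const (ContinuousOn.log ?_ fun t ht => ?_) 3
    · exact continuousOn_log.mono fun t ht => (hlog t ht).1.ne'
    · linarith [(hlog t ht).2]
  · obtain ⟨ht0, ht1⟩ := hlog t (Ioo_subset_Icc_self ht)
    exact (((hasDerivAt_log ht0.ne').log (by linarith)).div_const 3).hasDerivWithinAt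
  · exact ((continuousOn_one_div_of_pos continuous_one_add_add_mul_ρ
      fun _ => one_add_add_mul_ρ_pos).mono fun t ht => (exp_pos 1).le.trans ht.1).integrableOn_Icc
  · obtain ⟨ht0, ht1⟩ := hlog t (Ioo_subset_Icc_self ht)
    have h1t : 1 ≤ t := (one_le_exp zero_le_one).trans ht.1.le
    rw [ρ_of_exp_one_lt ht.1, show t⁻¹ / log t / 3 = 1 / (3 * (t * log t)) by field_simp]
    exact one_div_le_one_div_of_le (by positivity) (by nlinarith)

lemma tendsto_integral_one_div_one_add_add_mul_ρ_atTop :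
    Tendsto (fun z => ∫ x in 0..z, 1 / (1 + x + x * ρ x)) atTop atTop := by
  have hint {a b : ℝ} (ha : 0 ≤ a) (hb : 0 ≤ b) := intervalIntegrable_one_div_of_pos
    continuous_one_add_add_mul_ρ (fun _ => one_add_add_mul_ρ_pos) ha hb
  have hloglog : Tendsto (fun z => log (log z) / 3) atTop atTop :=
    (tendsto_log_atTop.comp tendsto_log_atTop).atTop_div_const (by norm_num)
  refine tendsto_atTop_mono' _ ?_
    (tendsto_atTop_add_const_left _ (∫ x in 0..exp 1, 1 / (1 + x + x * ρ x)) hloglog)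
  filter_upwards [eventually_ge_atTop (exp 1)] with z hz
  rw [← integral_add_adjacent_intervals (hint le_rfl (exp_pos 1).le)
    (hint (exp_pos 1).le ((exp_pos 1).le.trans hz))]
  exact add_le_add_right (log_log_div_three_le_integral hz) _

theorem stmt_15 :
    (∀ z : ℝ, 0 ≤ z →
      HasDerivWithinAt Φ (Φ z / (1 + z + z * ρ z)) (Set.Ici 0) z) ∧
    ConcaveOn ℝ (Set.Ici 0) Φ ∧
    Filter.Tendsto Φ Filter.atTop Filter.atTop := by
  have hpos : ∀ x, 0 ≤ x → 0 < 1 + x + x * ρ x := fun _ => one_add_add_mul_ρ_pos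
  refine ⟨fun z hz => ?_, ?_, ?_⟩
  · exact (hasDerivAt_exp_integral_one_div continuous_one_add_add_mul_ρ hpos hz).hasDerivWithinAt
  · exact concaveOn_exp_integral_one_div continuous_one_add_add_mul_ρ hpos
      monotoneOn_one_add_add_mul_ρ_sub
  · exact tendsto_exp_atTop.comp tendsto_integral_one_div_one_add_add_mul_ρ_atTop
end
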